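/- Fix a ∈ (0,1/2) and let ρ be the V-path quasi-metric on the dyadic rationals of [0,1]. For every triple z_0, z_1, z_2 of distinct points, ρ(z_1,z_2) ≤ ((1-a)/a)·(ρ(z_1,z_0) + ρ(z_0,z_2)). In particular, for any ε > 0 one may choose a close enough to 1/2 so that ρ(z_1,z_2) ≤ (1+ε)(ρ(z_1,z_0) + ρ(z_0,z_2)) for all triples. -/

import Mathlib

/-- A rational is dyadic if it can be written as `k / 2^n`. -/
def IsDyadic (q : ℚ) : Prop := ∃ (k : ℤ) (n : ℕ), q = (k : ℚ) / 2 ^ n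

/-- Membership in `Z`, the set of dyadic rationals of `[0,1]`. -/
def InZ (q : ℚ) : Prop := 0 ≤ q ∧ q ≤ 1 ∧ IsDyadic q

/-- The level of a dyadic rational: the least `n` with `q = k / 2^n` for some
integer `k`.  The endpoints `0` and `1` have level `0`. -/
noncomputable def level (q : ℚ) : ℕ := sInf {n : ℕ | ∃ k : ℤ, q = (k : ℚ) / 2 ^ n}

/-- The left neighbor `l(z) = (k-1)/2^n` of `z = k/2^n` (in lowest terms,
`k` odd, `n ≥ 1`); points of level `0` are fixed. -/
noncomputable def lnb (q : ℚ) : ℚ :=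
  if level q = 0 then q else q - (1 / 2 : ℚ) ^ level q

/-- The right neighbor `r(z) = (k+1)/2^n` of `z = k/2^n` (in lowest terms,
`k` odd, `n ≥ 1`); points of level `0` are fixed. -/
noncomputable def rnb (q : ℚ) : ℚ :=
  if level q = 0 then q else q + (1 / 2 : ℚ) ^ level q

/-- `ρ` is the V-path quasi-metric on the dyadic rationals of `[0,1]` with
parameter `a`: it is symmetric, vanishes on the diagonal, is nonnegative on
`Z`, satisfies `ρ(0,1) = 1`, and decomposes along the unique V-shaped path:
for `z < z'` in `Z` the first edge taken from the higher-level endpoint has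
length `a^level`. These properties characterize the sum of edge lengths
`a^{ℓ(w)}` along the V-shaped path joining `z` and `z'`. -/
def IsVPath (a : ℝ) (ρ : ℚ → ℚ → ℝ) : Prop :=
  (∀ z z', ρ z z' = ρ z' z) ∧
  (∀ z, ρ z z = 0) ∧
  (∀ z z', InZ z → InZ z' → 0 ≤ ρ z z') ∧
  ρ 0 1 = 1 ∧
  (∀ z z', InZ z → InZ z' → z < z' → 1 ≤ level z → level z' ≤ level z →
    ρ z z' = a ^ level z + ρ (rnb z) z') ∧
  (∀ z z', InZ z → InZ z' → z < z' → level z < level z' →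
    ρ z z' = ρ z (lnb z') + a ^ level z')

/-- `τ_n = a + a² + ⋯ + a^{n-1} + 2 a^n`. -/
noncomputable def tau (a : ℝ) (n : ℕ) : ℝ :=
  (∑ i ∈ Finset.Ico 1 n, a ^ i) + 2 * a ^ n

/-!
Write `K = (1 - a) / a`. By the recursive description of `ρ`, the V-path from `x < z` begins
with the edge at the endpoint of larger level, which gives an induction principle along
V-paths, and the path passes through every point lower than all points on one side of it.
Halving an edge `[u, v]` of length `aⁿ` shows, for `u ≤ p ≤ v`, that `ρ(u,p), ρ(p,v) ≤ aⁿ`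
(as `2a ≤ 1`) and `aⁿ ≤ K (ρ(u,p) + ρ(p,v))` (as `K a^{n+1} + a^{n+1} = aⁿ`). The first bound
makes `ρ` monotone under shrinking intervals, which settles `z₀ ∉ [z₁, z₂]` since `K ≥ 1`.
For `z₀ ∈ [z₁, z₂]`, walk along the V-path from `z₁` to `z₂`: the edges not containing `z₀`
are absorbed by `K ≥ 1`, and the one containing `z₀` costs at most `K` times the detour
through `z₀` by the second bound.
-/

lemma level_le_of_eq_div {q : ℚ} {n : ℕ} {k : ℤ} (h : q = k / 2 ^ n) : level q ≤ n :=
  Nat.sInf_le ⟨k, h⟩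

lemma exists_eq_div_of_level_le {q : ℚ} (hq : IsDyadic q) {n : ℕ} (h : level q ≤ n) :
    ∃ k : ℤ, q = k / 2 ^ n := by
  obtain ⟨k, n₀, hk⟩ := hq
  obtain ⟨j, hj⟩ : ∃ j : ℤ, q = j / 2 ^ level q :=
    Nat.sInf_mem (s := {n | ∃ k : ℤ, q = k / 2 ^ n}) ⟨n₀, k, hk⟩
  obtain ⟨d, rfl⟩ := Nat.exists_eq_add_of_le h
  refine ⟨j * 2 ^ d, hj.trans ?_⟩
  push_cast
  rw [pow_add, mul_div_mul_right _ _ (by positivity)]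

lemma level_zero : level 0 = 0 :=
  Nat.le_zero.mp (level_le_of_eq_div (k := 0) (by simp))

lemma level_one : level 1 = 0 :=
  Nat.le_zero.mp (level_le_of_eq_div (k := 1) (by simp))

lemma eq_zero_or_eq_one_of_level_eq_zero {q : ℚ} (hq : InZ q) (h : level q = 0) :
    q = 0 ∨ q = 1 := by
  obtain ⟨k, rfl⟩ := exists_eq_div_of_level_le hq.2.2 h.le
  obtain ⟨h0, h1, -⟩ := hq
  rw [pow_zero, div_one] at h0 h1 ⊢
  have : 0 ≤ k := by exact_mod_cast h0
  have : k ≤ 1 := by exact_mod_cast h1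
  interval_cases k <;> simp

lemma add_half_pow_le {u v : ℚ} {n : ℕ} (hu : IsDyadic u) (hv : IsDyadic v)
    (hun : level u ≤ n) (hvn : level v ≤ n) (huv : u < v) : u + (1 / 2) ^ n ≤ v := by
  obtain ⟨k, rfl⟩ := exists_eq_div_of_level_le hu hun
  obtain ⟨j, rfl⟩ := exists_eq_div_of_level_le hv hvn
  have hkj : k < j := by exact_mod_cast (div_lt_div_iff_of_pos_right (by positivity)).mp huv
  have : (k : ℚ) + 1 ≤ j := by exact_mod_cast hkj
  rw [one_div_pow, ← add_div]
  gcongr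

lemma level_rnb_lt_and_level_lnb_lt {q : ℚ} (hq : IsDyadic q) (h : 1 ≤ level q) :
    level (rnb q) < level q ∧ level (lnb q) < level q := by
  obtain ⟨m, hm⟩ : ∃ m, level q = m + 1 := ⟨level q - 1, by omega⟩
  obtain ⟨k, hk⟩ := exists_eq_div_of_level_le hq hm.le
  have half : ∀ j : ℤ, ((2 * j : ℤ) : ℚ) / 2 ^ (m + 1) = j / 2 ^ m := fun j => by
    push_cast; rw [pow_succ]; field_simp
  -- `k` is odd, so `k ± 1` is even and both neighbours drop a level
  obtain ⟨j, rfl⟩ : Odd k := by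
    refine Int.not_even_iff_odd.mp fun ⟨j, hj⟩ => ?_
    rw [hj, ← two_mul, half] at hk
    have := level_le_of_eq_div hk
    omega
  have hr : rnb q = ((2 * (j + 1) : ℤ) : ℚ) / 2 ^ (m + 1) := by
    rw [rnb, if_neg (by omega), hm, hk, one_div_pow]; push_cast; ring
  have hl : lnb q = ((2 * j : ℤ) : ℚ) / 2 ^ (m + 1) := by
    rw [lnb, if_neg (by omega), hm, hk, one_div_pow]; push_cast; ring
  rw [half] at hr hl
  exact ⟨(level_le_of_eq_div hr).trans_lt (by omega), (level_le_of_eq_div hl).trans_lt (by omega)⟩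

lemma lt_rnb_of_level {q : ℚ} (h : 1 ≤ level q) : q < rnb q := by
  rw [rnb, if_neg (by omega)]; exact lt_add_of_pos_right q (by positivity)

lemma lnb_lt_of_level {q : ℚ} (h : 1 ≤ level q) : lnb q < q := by
  rw [lnb, if_neg (by omega)]; exact sub_lt_self q (by positivity)

/-- `[u, v]` is an edge of level `n` of the dyadic subdivision of `Z`; the edges `{w, l(w)}`,
`{w, r(w)}` of the V-path graph are those of level `ℓ(w)`. -/
structure IsEdge (n : ℕ) (u v : ℚ) : Prop where
  inZ_left : InZ u
  inZ_right : InZ v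
  level_left_le : level u ≤ n
  level_right_le : level v ≤ n
  right_eq : v = u + (1 / 2) ^ n

namespace IsEdge

variable {n : ℕ} {u v : ℚ}

lemma lt (he : IsEdge n u v) : u < v := by
  rw [he.right_eq]; exact lt_add_of_pos_right u (by positivity)

lemma lt_level (he : IsEdge n u v) {q : ℚ} (hq : IsDyadic q) (huq : u < q) (hqv : q < v) :
    n < level q := by
  by_contra! h
  have := add_half_pow_le he.inZ_left.2.2 hq he.level_left_le h huq
  rw [← he.right_eq] at this
  exact (this.trans_lt hqv).false

lemma mid_left (he : IsEdge n u v) : IsEdge (n + 1) u (u + (1 / 2) ^ (n + 1)) := by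
  obtain ⟨k, hk⟩ := exists_eq_div_of_level_le he.inZ_left.2.2 he.level_left_le
  have hc : u + (1 / 2) ^ (n + 1) = ((2 * k + 1 : ℤ) : ℚ) / 2 ^ (n + 1) := by
    rw [hk, one_div_pow, pow_succ]; push_cast; field_simp
  have hcv : u + (1 / 2) ^ (n + 1) ≤ v := by
    rw [he.right_eq, pow_succ]; linarith [pow_pos (by norm_num : (0 : ℚ) < 1 / 2) n]
  exact ⟨he.inZ_left, ⟨he.inZ_left.1.trans (le_add_of_nonneg_right (by positivity)),
    hcv.trans he.inZ_right.2.1, _, _, hc⟩, he.level_left_le.trans n.le_succ,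
    level_le_of_eq_div hc, rfl⟩

lemma mid_right (he : IsEdge n u v) : IsEdge (n + 1) (u + (1 / 2) ^ (n + 1)) v :=
  ⟨he.mid_left.inZ_right, he.inZ_right, he.mid_left.level_right_le,
    he.level_right_le.trans n.le_succ, by rw [he.right_eq, pow_succ]; ring⟩

end IsEdge

lemma isEdge_zero_one : IsEdge 0 0 1 :=
  ⟨⟨le_rfl, zero_le_one, 0, 0, by simp⟩, ⟨zero_le_one, le_rfl, 1, 0, by simp⟩,
    level_zero.le, level_one.le, by norm_num⟩

lemma lt_one_of_one_le_level {q : ℚ} (hq : InZ q) (h : 1 ≤ level q) : q < 1 :=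
  hq.2.1.lt_of_ne (by rintro rfl; rw [level_one] at h; omega)

lemma pos_of_one_le_level {q : ℚ} (hq : InZ q) (h : 1 ≤ level q) : 0 < q :=
  hq.1.lt_of_ne (by rintro rfl; rw [level_zero] at h; omega)

lemma isEdge_rnb {q : ℚ} (hq : InZ q) (h : 1 ≤ level q) : IsEdge (level q) q (rnb q) := by
  have hr : rnb q = q + (1 / 2) ^ level q := if_neg (by omega)
  obtain ⟨k, hk⟩ := exists_eq_div_of_level_le hq.2.2 le_rfl
  have hd : IsDyadic (rnb q) :=
    ⟨k + 1, level q, by rw [hr, one_div_pow]; push_cast; rw [add_div, ← hk]⟩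
  refine ⟨hq, ⟨?_, ?_, hd⟩, le_rfl, (level_rnb_lt_and_level_lnb_lt hq.2.2 h).1.le, hr⟩
  · rw [hr]; exact hq.1.trans (le_add_of_nonneg_right (by positivity))
  · rw [hr]
    exact add_half_pow_le hq.2.2 ⟨1, 0, by simp⟩ le_rfl (level_one.trans_le (Nat.zero_le _))
      (lt_one_of_one_le_level hq h)

lemma isEdge_lnb {q : ℚ} (hq : InZ q) (h : 1 ≤ level q) : IsEdge (level q) (lnb q) q := by
  have hl : lnb q = q - (1 / 2) ^ level q := if_neg (by omega)
  obtain ⟨k, hk⟩ := exists_eq_div_of_level_le hq.2.2 le_rfl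
  have hd : IsDyadic (lnb q) :=
    ⟨k - 1, level q, by rw [hl, one_div_pow]; push_cast; rw [sub_div, ← hk]⟩
  refine ⟨⟨?_, ?_, hd⟩, hq, (level_rnb_lt_and_level_lnb_lt hq.2.2 h).2.le, le_rfl,
    by rw [hl]; ring⟩
  · have := add_half_pow_le ⟨0, 0, by simp⟩ hq.2.2 (level_zero.trans_le (Nat.zero_le _)) le_rfl
      (pos_of_one_le_level hq h)
    rw [hl]; linarith
  · rw [hl]; linarith [hq.2.1, pow_pos (by norm_num : (0 : ℚ) < 1 / 2) (level q)]

lemma rnb_le_of_level_le {x w : ℚ} (hx : InZ x) (hw : IsDyadic w) (h : 1 ≤ level x)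
    (hxw : x < w) (hlev : level w ≤ level x) : rnb x ≤ w :=
  not_lt.mp fun hwr => ((isEdge_rnb hx h).lt_level hw hxw hwr).not_ge hlev

lemma le_lnb_of_level_le {w z : ℚ} (hz : InZ z) (hw : IsDyadic w) (h : 1 ≤ level z)
    (hwz : w < z) (hlev : level w ≤ level z) : w ≤ lnb z :=
  not_lt.mp fun hlw => ((isEdge_lnb hz h).lt_level hw hlw hwz).not_ge hlev

namespace IsVPath

variable {a : ℝ} {ρ : ℚ → ℚ → ℝ}

lemma symm (hρ : IsVPath a ρ) (z z' : ℚ) : ρ z z' = ρ z' z := hρ.1 z z'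

lemma rho_self (hρ : IsVPath a ρ) (z : ℚ) : ρ z z = 0 := hρ.2.1 z

lemma nonneg (hρ : IsVPath a ρ) {z z' : ℚ} (hz : InZ z) (hz' : InZ z') : 0 ≤ ρ z z' :=
  hρ.2.2.1 z z' hz hz'

lemma rho_zero_one (hρ : IsVPath a ρ) : ρ 0 1 = 1 := hρ.2.2.2.1

lemma eq_pow_add_rnb (hρ : IsVPath a ρ) {z z' : ℚ} (hz : InZ z) (hz' : InZ z') (hzz' : z < z')
    (h : 1 ≤ level z) (hlev : level z' ≤ level z) : ρ z z' = a ^ level z + ρ (rnb z) z' :=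
  hρ.2.2.2.2.1 z z' hz hz' hzz' h hlev

lemma eq_lnb_add_pow (hρ : IsVPath a ρ) {z z' : ℚ} (hz : InZ z) (hz' : InZ z') (hzz' : z < z')
    (hlev : level z < level z') : ρ z z' = ρ z (lnb z') + a ^ level z' :=
  hρ.2.2.2.2.2 z z' hz hz' hzz' hlev

end IsVPath

lemma IsEdge.rho_eq {a : ℝ} {ρ : ℚ → ℚ → ℝ} {n : ℕ} {u v : ℚ} (he : IsEdge n u v)
    (hρ : IsVPath a ρ) : ρ u v = a ^ n := by
  rcases n.eq_zero_or_pos with rfl | hn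
  · rcases eq_zero_or_eq_one_of_level_eq_zero he.inZ_left (Nat.le_zero.mp he.level_left_le)
      with rfl | rfl
    · rw [he.right_eq, zero_add, pow_zero, pow_zero, hρ.rho_zero_one]
    · linarith [he.right_eq, he.inZ_right.2.1, pow_pos (by norm_num : (0 : ℚ) < 1 / 2) 0]
  rcases he.level_left_le.eq_or_lt with hu | hu
  · have hr : rnb u = v := by rw [rnb, if_neg (by omega), hu, he.right_eq]
    rw [hρ.eq_pow_add_rnb he.inZ_left he.inZ_right he.lt (by omega) (hu ▸ he.level_right_le),
      hr, hρ.rho_self, hu, add_zero]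
  · -- two multiples of `2^(1-n)` cannot be `2⁻ⁿ` apart, so `v` has level exactly `n`
    have hv : level v = n := by
      refine he.level_right_le.antisymm (not_lt.mp fun hv => ?_)
      have := add_half_pow_le he.inZ_left.2.2 he.inZ_right.2.2 (Nat.le_pred_of_lt hu)
        (Nat.le_pred_of_lt hv) he.lt
      rw [he.right_eq] at this
      have := pow_lt_pow_right_of_lt_one₀ (by norm_num : (0 : ℚ) < 1 / 2) (by norm_num)
        (Nat.pred_lt hn.ne')
      linarith
    have hl : lnb v = u := by rw [lnb, if_neg (by omega), hv, he.right_eq]; ring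
    rw [hρ.eq_lnb_add_pow he.inZ_left he.inZ_right he.lt (hv ▸ hu), hl, hρ.rho_self, hv,
      zero_add]

theorem vpath_induction {P : ℚ → ℚ → Prop} (refl : ∀ z, InZ z → P z z) (zero_one : P 0 1)
    (rnb_step : ∀ x z, InZ x → InZ z → x < z → 1 ≤ level x → level z ≤ level x →
      rnb x ≤ z → P (rnb x) z → P x z)
    (lnb_step : ∀ x z, InZ x → InZ z → x < z → level x < level z →
      x ≤ lnb z → P x (lnb z) → P x z)
    {x z : ℚ} (hx : InZ x) (hz : InZ z) (hxz : x ≤ z) : P x z := by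
  induction hN : level x + level z using Nat.strong_induction_on generalizing x z with
  | _ N ih =>
  rcases hxz.eq_or_lt with rfl | hxz
  · exact refl x hx
  by_cases hr : 1 ≤ level x ∧ level z ≤ level x
  · have he := isEdge_rnb hx hr.1
    have hrz := rnb_le_of_level_le hx hz.2.2 hr.1 hxz hr.2
    refine rnb_step x z hx hz hxz hr.1 hr.2 hrz (ih _ ?_ he.inZ_right hz hrz rfl)
    have := (level_rnb_lt_and_level_lnb_lt hx.2.2 hr.1).1
    omega
  by_cases hl : level x < level z
  · have he := isEdge_lnb hz (by omega)
    have hxl := le_lnb_of_level_le hz hx.2.2 (by omega) hxz hl.le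
    refine lnb_step x z hx hz hxz hl hxl (ih _ ?_ hx he.inZ_left hxl rfl)
    have := (level_rnb_lt_and_level_lnb_lt hz.2.2 (by omega)).2
    omega
  obtain rfl : x = 0 := (eq_zero_or_eq_one_of_level_eq_zero hx (by omega)).resolve_right
    (by rintro rfl; linarith [hz.2.1])
  obtain rfl : z = 1 := (eq_zero_or_eq_one_of_level_eq_zero hz (by omega)).resolve_left
    (by rintro rfl; exact hxz.false)
  exact zero_one

namespace IsVPath

variable {a : ℝ} {ρ : ℚ → ℚ → ℝ}

lemma rho_eq_add (hρ : IsVPath a ρ) {x w y : ℚ} (hx : InZ x) (hw : InZ w) (hy : InZ y)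
    (hxw : x ≤ w) (hwy : w ≤ y)
    (hlow : (∀ q, InZ q → x ≤ q → q < w → level w < level q) ∨
      (∀ q, InZ q → w < q → q ≤ y → level w < level q)) :
    ρ x y = ρ x w + ρ w y := by
  have endpoint : ∀ x w y, (w = x ∨ w = y) → ρ x y = ρ x w + ρ w y := by
    rintro x w y (rfl | rfl) <;> simp [hρ.rho_self]
  refine vpath_induction (P := fun x y => ∀ w, InZ w → x ≤ w → w ≤ y →
    ((∀ q, InZ q → x ≤ q → q < w → level w < level q) ∨
      (∀ q, InZ q → w < q → q ≤ y → level w < level q)) → ρ x y = ρ x w + ρ w y)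
    ?_ ?_ ?_ ?_ hx hy (hxw.trans hwy) w hw hxw hwy hlow
  · exact fun z _ w _ h h' _ => endpoint _ _ _ (Or.inl (h'.antisymm h))
  · intro w hw h0w hw1 hlow
    refine endpoint _ _ _ (hlow.imp (fun h => ?_) fun h => ?_)
    · by_contra hne
      have := h 0 isEdge_zero_one.inZ_left le_rfl (h0w.lt_of_ne (Ne.symm hne))
      rw [level_zero] at this; omega
    · by_contra hne
      have := h 1 isEdge_zero_one.inZ_right (hw1.lt_of_ne hne) le_rfl
      rw [level_one] at this; omega
  · intro x y hx hy hxy hx1 hyx hry ih w hw hxw hwy hlow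
    rcases hxw.eq_or_lt with rfl | hxw
    · exact endpoint _ _ _ (Or.inl rfl)
    rcases hwy.eq_or_lt with rfl | hwy
    · exact endpoint _ _ _ (Or.inr rfl)
    have hwx : level w < level x :=
      hlow.elim (fun h => h x hx le_rfl hxw) fun h => (h y hy hwy le_rfl).trans_le hyx
    have hrw := rnb_le_of_level_le hx hw.2.2 hx1 hxw hwx.le
    rw [hρ.eq_pow_add_rnb hx hy hxy hx1 hyx, hρ.eq_pow_add_rnb hx hw hxw hx1 hwx.le,
      ih w hw hrw hwy.le (hlow.imp (fun h q hq hrq hqw =>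
        h q hq ((lt_rnb_of_level hx1).le.trans hrq) hqw) id), add_assoc]
  · intro x y hx hy hxy hxy' hxl ih w hw hxw hwy hlow
    rcases hxw.eq_or_lt with rfl | hxw
    · exact endpoint _ _ _ (Or.inl rfl)
    rcases hwy.eq_or_lt with rfl | hwy
    · exact endpoint _ _ _ (Or.inr rfl)
    have hwy' : level w < level y :=
      hlow.elim (fun h => (h x hx le_rfl hxw).trans hxy') fun h => h y hy hwy le_rfl
    have hy1 : 1 ≤ level y := by omega
    have hwl := le_lnb_of_level_le hy hw.2.2 hy1 hwy hwy'.le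
    rw [hρ.eq_lnb_add_pow hx hy hxy hxy', hρ.eq_lnb_add_pow hw hy hwy hwy',
      ih w hw hxw.le hwl (hlow.imp id (fun h q hq hwq hql =>
        h q hq hwq (hql.trans (lnb_lt_of_level hy1).le))), add_assoc]

lemma eq_pow_add_rnb_of_rnb_le (hρ : IsVPath a ρ) {x z : ℚ} (hx : InZ x) (hz : InZ z)
    (h : 1 ≤ level x) (hrz : rnb x ≤ z) : ρ x z = a ^ level x + ρ (rnb x) z := by
  have he := isEdge_rnb hx h
  have hr := (level_rnb_lt_and_level_lnb_lt hx.2.2 h).1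
  rw [hρ.rho_eq_add hx he.inZ_right hz he.lt.le hrz (Or.inl fun q hq hxq hqr => ?_), he.rho_eq hρ]
  rcases hxq.eq_or_lt with rfl | hxq
  · exact hr
  · exact hr.trans (he.lt_level hq.2.2 hxq hqr)

lemma eq_lnb_add_pow_of_le_lnb (hρ : IsVPath a ρ) {x z : ℚ} (hx : InZ x) (hz : InZ z)
    (h : 1 ≤ level z) (hxl : x ≤ lnb z) : ρ x z = ρ x (lnb z) + a ^ level z := by
  have he := isEdge_lnb hz h
  have hl := (level_rnb_lt_and_level_lnb_lt hz.2.2 h).2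
  rw [hρ.rho_eq_add hx he.inZ_left hz hxl he.lt.le (Or.inr fun q hq hlq hqz => ?_), he.rho_eq hρ]
  rcases hqz.eq_or_lt with rfl | hqz
  · exact hl
  · exact hl.trans (he.lt_level hq.2.2 hlq hqz)

end IsVPath

lemma one_le_one_sub_div {a : ℝ} (ha0 : 0 < a) (ha : a ≤ 1 / 2) : 1 ≤ (1 - a) / a := by
  rw [le_div_iff₀ ha0]; linarith

namespace IsEdge

variable {a : ℝ} {ρ : ℚ → ℚ → ℝ} {n : ℕ} {u v : ℚ}

lemma rho_eq_add_right (he : IsEdge n u v) (hρ : IsVPath a ρ) {p z : ℚ} (hp : InZ p)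
    (hz : InZ z) (hup : u < p) (hpv : p ≤ v) (hvz : v ≤ z) : ρ p z = ρ p v + ρ v z :=
  hρ.rho_eq_add hp he.inZ_right hz hpv hvz (Or.inl fun _ hq hpq hqv =>
    he.level_right_le.trans_lt (he.lt_level hq.2.2 (hup.trans_le hpq) hqv))

lemma rho_eq_add_left (he : IsEdge n u v) (hρ : IsVPath a ρ) {y p : ℚ} (hy : InZ y)
    (hp : InZ p) (hyu : y ≤ u) (hup : u ≤ p) (hpv : p < v) : ρ y p = ρ y u + ρ u p :=
  hρ.rho_eq_add hy he.inZ_left hp hyu hup (Or.inr fun _ hq huq hqp =>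
    he.level_left_le.trans_lt (he.lt_level hq.2.2 huq (hqp.trans_lt hpv)))

theorem induction_on_point {Q : ℕ → ℚ → ℚ → ℚ → Prop}
    (left : ∀ n u v, IsEdge n u v → Q n u v u) (right : ∀ n u v, IsEdge n u v → Q n u v v)
    (lower : ∀ n u v p, IsEdge n u v → InZ p → u < p → p ≤ u + (1 / 2) ^ (n + 1) →
      Q (n + 1) u (u + (1 / 2) ^ (n + 1)) p → Q n u v p)
    (upper : ∀ n u v p, IsEdge n u v → InZ p → u + (1 / 2) ^ (n + 1) ≤ p → p < v →
      Q (n + 1) (u + (1 / 2) ^ (n + 1)) v p → Q n u v p)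
    (he : IsEdge n u v) {p : ℚ} (hp : InZ p) (hup : u ≤ p) (hpv : p ≤ v) : Q n u v p := by
  induction hd : level p - n using Nat.strong_induction_on generalizing n u v with
  | _ d ih =>
  rcases hup.eq_or_lt with rfl | hup
  · exact left n _ v he
  rcases hpv.eq_or_lt with rfl | hpv
  · exact right n u _ he
  have hn := he.lt_level hp.2.2 hup hpv
  rcases le_total p (u + (1 / 2) ^ (n + 1)) with hpc | hcp
  · exact lower n u v p he hp hup hpc (ih _ (by omega) he.mid_left hup.le hpc rfl)
  · exact upper n u v p he hp hcp hpv (ih _ (by omega) he.mid_right hcp hpv.le rfl)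

lemma rho_le_pow (he : IsEdge n u v) (hρ : IsVPath a ρ) (ha0 : 0 ≤ a) (ha : a ≤ 1 / 2)
    {p : ℚ} (hp : InZ p) (hup : u ≤ p) (hpv : p ≤ v) : ρ u p ≤ a ^ n ∧ ρ p v ≤ a ^ n := by
  refine he.induction_on_point (Q := fun n u v p => ρ u p ≤ a ^ n ∧ ρ p v ≤ a ^ n)
    (fun n u v he => ?_) (fun n u v he => ?_) (fun n u v p he hp hup hpc ih => ?_)
    (fun n u v p he hp hcp hpv ih => ?_) hp hup hpv
  all_goals
    have hn : a ^ (n + 1) ≤ a ^ n := pow_le_pow_of_le_one ha0 (by linarith) n.le_succ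
    have h2 : 2 * a ^ (n + 1) ≤ a ^ n := by rw [pow_succ]; nlinarith [pow_nonneg ha0 n]
  · simp only [hρ.rho_self, he.rho_eq hρ]; exact ⟨pow_nonneg ha0 n, le_rfl⟩
  · simp only [hρ.rho_self, he.rho_eq hρ]; exact ⟨le_rfl, pow_nonneg ha0 n⟩
  · rw [he.mid_left.rho_eq_add_right hρ hp he.inZ_right hup hpc he.mid_right.lt.le,
      he.mid_right.rho_eq hρ]
    constructor <;> linarith [ih.1, ih.2]
  · rw [he.mid_right.rho_eq_add_left hρ he.inZ_left hp he.mid_left.lt.le hcp hpv,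
      he.mid_left.rho_eq hρ]
    constructor <;> linarith [ih.1, ih.2]

lemma pow_le_rho_add (he : IsEdge n u v) (hρ : IsVPath a ρ) (ha0 : 0 < a) (ha : a ≤ 1 / 2)
    {p : ℚ} (hp : InZ p) (hup : u ≤ p) (hpv : p ≤ v) :
    a ^ n ≤ (1 - a) / a * (ρ u p + ρ p v) := by
  have hK := one_le_one_sub_div ha0 ha
  refine he.induction_on_point (Q := fun n u v p => a ^ n ≤ (1 - a) / a * (ρ u p + ρ p v))
    (fun n u v he => ?_) (fun n u v he => ?_) (fun n u v p he hp hup hpc ih => ?_)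
    (fun n u v p he hp hcp hpv ih => ?_) hp hup hpv
  all_goals
    have hstep : (1 - a) / a * a ^ (n + 1) + a ^ (n + 1) = a ^ n := by
      rw [pow_succ]; field_simp; ring
  · rw [hρ.rho_self, zero_add, he.rho_eq hρ]
    exact le_mul_of_one_le_left (pow_nonneg ha0.le n) hK
  · rw [hρ.rho_self, add_zero, he.rho_eq hρ]
    exact le_mul_of_one_le_left (pow_nonneg ha0.le n) hK
  · rw [he.mid_left.rho_eq_add_right hρ hp he.inZ_right hup hpc he.mid_right.lt.le,
      he.mid_right.rho_eq hρ]
    linarith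
  · rw [he.mid_right.rho_eq_add_left hρ he.inZ_left hp he.mid_left.lt.le hcp hpv,
      he.mid_left.rho_eq hρ]
    linarith

end IsEdge

namespace IsVPath

variable {a : ℝ} {ρ : ℚ → ℚ → ℝ}

lemma rho_le_of_le_of_le (hρ : IsVPath a ρ) (ha0 : 0 ≤ a) (ha : a ≤ 1 / 2) {x y z : ℚ}
    (hx : InZ x) (hy : InZ y) (hz : InZ z) (hxy : x ≤ y) (hyz : y ≤ z) :
    ρ y z ≤ ρ x z ∧ ρ x y ≤ ρ x z := by
  have endpoint : ∀ x y z, InZ x → InZ z → (y = x ∨ y = z) → ρ y z ≤ ρ x z ∧ ρ x y ≤ ρ x z := by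
    rintro x y z hx hz (rfl | rfl) <;> simp [hρ.rho_self, hρ.nonneg hx hz]
  refine vpath_induction (P := fun x z => ∀ y, InZ y → x ≤ y → y ≤ z →
    ρ y z ≤ ρ x z ∧ ρ x y ≤ ρ x z) (fun z hz y _ h h' => endpoint z y z hz hz (Or.inr
      (h'.antisymm h))) ?_ ?_ ?_ hx hz (hxy.trans hyz) y hy hxy hyz
  · intro y hy h0y hy1
    have he := isEdge_zero_one
    rw [he.rho_eq hρ, pow_zero]
    simpa using (he.rho_le_pow hρ ha0 ha hy h0y hy1).symm
  · intro x z hx hz hxz hx1 hzx hrz ih y hy hxy hyz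
    rcases hxy.eq_or_lt with rfl | hxy
    · exact endpoint _ _ _ hx hz (Or.inl rfl)
    have he := isEdge_rnb hx hx1
    have hpow := pow_nonneg ha0 (level x)
    rw [hρ.eq_pow_add_rnb hx hz hxz hx1 hzx]
    rcases le_or_gt (rnb x) y with hry | hyr
    · obtain ⟨h1, h2⟩ := ih y hy hry hyz
      rw [hρ.eq_pow_add_rnb_of_rnb_le hx hy hx1 hry]
      constructor <;> linarith
    · have hb := he.rho_le_pow hρ ha0 ha hy hxy.le hyr.le
      have := hρ.nonneg he.inZ_right hz
      rw [he.rho_eq_add_right hρ hy hz hxy hyr.le hrz]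
      constructor <;> linarith [hb.1, hb.2]
  · intro x z hx hz hxz hxz' hxl ih y hy hxy hyz
    rcases hyz.eq_or_lt with rfl | hyz
    · exact endpoint _ _ _ hx hy (Or.inr rfl)
    have hz1 : 1 ≤ level z := by omega
    have he := isEdge_lnb hz hz1
    have hpow := pow_nonneg ha0 (level z)
    rw [hρ.eq_lnb_add_pow hx hz hxz hxz']
    rcases le_or_gt y (lnb z) with hyl | hly
    · obtain ⟨h1, h2⟩ := ih y hy hxy hyl
      rw [hρ.eq_lnb_add_pow_of_le_lnb hy hz hz1 hyl]
      constructor <;> linarith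
    · have hb := he.rho_le_pow hρ ha0 ha hy hly.le hyz.le
      have := hρ.nonneg hx he.inZ_left
      rw [he.rho_eq_add_left hρ hx hy hxl hly.le hyz]
      constructor <;> linarith [hb.1, hb.2]

lemma rho_le_mul_add_of_mem_Icc (hρ : IsVPath a ρ) (ha0 : 0 < a) (ha : a ≤ 1 / 2) {x p z : ℚ}
    (hx : InZ x) (hp : InZ p) (hz : InZ z) (hxp : x ≤ p) (hpz : p ≤ z) :
    ρ x z ≤ (1 - a) / a * (ρ x p + ρ p z) := by
  have hK := one_le_one_sub_div ha0 ha
  have le_K_mul : ∀ {x z}, InZ x → InZ z → ρ x z ≤ (1 - a) / a * ρ x z :=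
    fun hx hz => le_mul_of_one_le_left (hρ.nonneg hx hz) hK
  have endpoint : ∀ x p z, InZ x → InZ z → (p = x ∨ p = z) →
      ρ x z ≤ (1 - a) / a * (ρ x p + ρ p z) := by
    rintro x p z hx hz (rfl | rfl)
    · rw [hρ.rho_self, zero_add]; exact le_K_mul hx hz
    · rw [hρ.rho_self, add_zero]; exact le_K_mul hx hz
  refine vpath_induction (P := fun x z => ∀ p, InZ p → x ≤ p → p ≤ z →
    ρ x z ≤ (1 - a) / a * (ρ x p + ρ p z)) (fun z hz p _ h h' => endpoint z p z hz hz (Or.inr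
      (h'.antisymm h))) ?_ ?_ ?_ hx hz (hxp.trans hpz) p hp hxp hpz
  · intro p hp h0p hp1
    have he := isEdge_zero_one
    simpa [he.rho_eq hρ] using he.pow_le_rho_add hρ ha0 ha hp h0p hp1
  · intro x z hx hz hxz hx1 hzx hrz ih p hp hxp hpz
    rcases hxp.eq_or_lt with rfl | hxp
    · exact endpoint _ _ _ hx hz (Or.inl rfl)
    have he := isEdge_rnb hx hx1
    rw [hρ.eq_pow_add_rnb hx hz hxz hx1 hzx]
    rcases le_or_gt (rnb x) p with hrp | hpr
    · rw [hρ.eq_pow_add_rnb_of_rnb_le hx hp hx1 hrp]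
      have := le_mul_of_one_le_left (pow_nonneg ha0.le (level x)) hK
      linarith [ih p hp hrp hpz, mul_add ((1 - a) / a) (a ^ level x) (ρ (rnb x) p + ρ p z)]
    · rw [he.rho_eq_add_right hρ hp hz hxp hpr.le hrz, ← add_assoc, mul_add]
      have := le_K_mul he.inZ_right hz
      linarith [he.pow_le_rho_add hρ ha0 ha hp hxp.le hpr.le]
  · intro x z hx hz hxz hxz' hxl ih p hp hxp hpz
    rcases hpz.eq_or_lt with rfl | hpz
    · exact endpoint _ _ _ hx hp (Or.inr rfl)
    have hz1 : 1 ≤ level z := by omega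
    have he := isEdge_lnb hz hz1
    rw [hρ.eq_lnb_add_pow hx hz hxz hxz']
    rcases le_or_gt p (lnb z) with hpl | hlp
    · rw [hρ.eq_lnb_add_pow_of_le_lnb hp hz hz1 hpl]
      have := le_mul_of_one_le_left (pow_nonneg ha0.le (level z)) hK
      linarith [ih p hp hxp hpl, mul_add ((1 - a) / a) (ρ x p + ρ p (lnb z)) (a ^ level z)]
    · rw [he.rho_eq_add_left hρ hx hp hxl hlp.le hpz, add_assoc, mul_add]
      have := le_K_mul hx he.inZ_left
      linarith [he.pow_le_rho_add hρ ha0 ha hp hlp.le hpz.le]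

lemma rho_le_mul_add (hρ : IsVPath a ρ) (ha0 : 0 < a) (ha : a ≤ 1 / 2) {z0 z1 z2 : ℚ}
    (hz0 : InZ z0) (hz1 : InZ z1) (hz2 : InZ z2) :
    ρ z1 z2 ≤ (1 - a) / a * (ρ z1 z0 + ρ z0 z2) := by
  wlog h12 : z1 ≤ z2 generalizing z1 z2
  · have := this hz2 hz1 (le_of_not_ge h12)
    rw [hρ.symm z1 z2, hρ.symm z1 z0, hρ.symm z0 z2, add_comm (ρ z0 z1)]
    exact this
  have hK := one_le_one_sub_div ha0 ha
  have h10 := hρ.nonneg hz1 hz0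
  have h02 := hρ.nonneg hz0 hz2
  rcases lt_or_ge z0 z1 with h01 | h10'
  · exact (hρ.rho_le_of_le_of_le ha0.le ha hz0 hz1 hz2 h01.le h12).1.trans
      ((le_add_of_nonneg_left h10).trans (le_mul_of_one_le_left (add_nonneg h10 h02) hK))
  rcases le_or_gt z0 z2 with h02' | h20
  · exact hρ.rho_le_mul_add_of_mem_Icc ha0 ha hz1 hz0 hz2 h10' h02'
  · exact (hρ.rho_le_of_le_of_le ha0.le ha hz1 hz2 hz0 h12 h20.le).2.trans
      ((le_add_of_nonneg_right h02).trans (le_mul_of_one_le_left (add_nonneg h10 h02) hK))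

end IsVPath

/-- For every triple of distinct points of `Z`,
`ρ(z_1,z_2) ≤ ((1-a)/a)(ρ(z_1,z_0) + ρ(z_0,z_2))`; in particular for every
`ε > 0` one may choose `a ∈ (0,1/2)` so that the V-path quasi-metric with
parameter `a` satisfies `ρ(z_1,z_2) ≤ (1+ε)(ρ(z_1,z_0) + ρ(z_0,z_2))`. -/
theorem vpath_relaxed_triangle (a : ℝ) (ha0 : 0 < a) (ha : a < 1 / 2)
    (ρ : ℚ → ℚ → ℝ) (hρ : IsVPath a ρ) :
    (∀ z0 z1 z2 : ℚ, InZ z0 → InZ z1 → InZ z2 →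
      z0 ≠ z1 → z0 ≠ z2 → z1 ≠ z2 →
      ρ z1 z2 ≤ ((1 - a) / a) * (ρ z1 z0 + ρ z0 z2)) ∧
    (∀ ε : ℝ, 0 < ε → ∃ a' : ℝ, 0 < a' ∧ a' < 1 / 2 ∧
      ∀ ρ' : ℚ → ℚ → ℝ, IsVPath a' ρ' →
        ∀ z0 z1 z2 : ℚ, InZ z0 → InZ z1 → InZ z2 →
          z0 ≠ z1 → z0 ≠ z2 → z1 ≠ z2 →
          ρ' z1 z2 ≤ (1 + ε) * (ρ' z1 z0 + ρ' z0 z2)) := by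
  refine ⟨fun z0 z1 z2 hz0 hz1 hz2 _ _ _ => hρ.rho_le_mul_add ha0 ha.le hz0 hz1 hz2,
    fun ε hε => ⟨1 / (2 + ε), by positivity, ?_, fun ρ' hρ' z0 z1 z2 hz0 hz1 hz2 _ _ _ => ?_⟩⟩
  · rw [div_lt_div_iff₀ (by linarith) two_pos]; linarith
  · have hK : (1 - 1 / (2 + ε)) / (1 / (2 + ε)) = 1 + ε := by
      field_simp; ring
    rw [← hK]
    exact hρ'.rho_le_mul_add (by positivity)
      (div_le_div_of_nonneg_left zero_le_one two_pos (by linarith)) hz0 hz1 hz2
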